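/- For any integers α, β, γ with β > 0 and γ ∉ {-1, 0}, the continued fraction [α, β, γ] equals [α+1, -2, 2, -2, ..., ±2, (-1)^β(γ+1)], where the alternating-sign ±2 block has β−1 terms; that is, α + 1/(β + 1/γ) = (α+1) + 1/(-2 + 1/(2 + 1/(-2 + ... + 1/((-1)^β(γ+1))))). -/

import Mathlib

/-!
Write `T n` for the tail `[-2, 2, -2, …, ±2, (-1)^(n+1) (γ+1)]` with `n` alternating terms.
Negating every entry negates the value of a continued fraction, and `T (n+1) = -2 :: (-T n)`,
so induction gives `T n = -((n+1)γ + 1)/(nγ + 1)`. Since `nγ + 1 ≠ 0` for `n ≥ 0` and `γ ≠ -1`,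
all denominators are nonzero, and with `β = n + 1` the identity reduces to
`1 - (nγ+1)/((n+1)γ+1) = γ/((n+1)γ+1)`.
-/

/-- Evaluation of a finite continued fraction `[q₀, q₁, …, q_r]`. -/
def E : List ℤ → ℚ
  | [] => 0
  | [q] => (q : ℚ)
  | q :: l => (q : ℚ) + 1 / E l

lemma E_cons_of_ne_nil (q : ℤ) {l : List ℤ} (hl : l ≠ []) : E (q :: l) = q + 1 / E l := by
  cases l with
  | nil => exact absurd rfl hl
  | cons a t => rfl

lemma E_map_neg : ∀ l : List ℤ, E (l.map Neg.neg) = -E l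
  | [] => by simp [E]
  | [q] => by simp [E]
  | q :: a :: l => by
    simp only [List.map_cons] at E_map_neg ⊢
    rw [E_cons_of_ne_nil _ (List.cons_ne_nil _ _), E_cons_of_ne_nil _ (List.cons_ne_nil _ _),
      ← List.map_cons, E_map_neg]
    push_cast
    ring

lemma natCast_mul_add_one_ne_zero (n : ℕ) {γ : ℤ} (hγ : γ ≠ -1) : (n : ℚ) * γ + 1 ≠ 0 := by
  have hℤ : (n : ℤ) * γ + 1 ≠ 0 := by
    intro h
    rcases Int.eq_one_or_neg_one_of_mul_eq_neg_one' (u := n) (v := γ) (by omega) with h1 | h1 <;>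
      omega
  exact_mod_cast hℤ

def altBlock (n : ℕ) : List ℤ :=
  List.ofFn fun i : Fin n => if (i : ℕ) % 2 = 0 then (-2 : ℤ) else 2

lemma altBlock_succ (n : ℕ) : altBlock (n + 1) = -2 :: (altBlock n).map Neg.neg := by
  rw [altBlock, altBlock, List.ofFn_succ, List.map_ofFn]
  congr 2
  funext i
  simp only [Function.comp_apply, Fin.val_succ]
  rcases Nat.mod_two_eq_zero_or_one i with h | h <;> simp [h, Nat.succ_mod_two_eq_zero_iff]

lemma E_altBlock_append (n : ℕ) {γ : ℤ} (hγ : γ ≠ -1) :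
    E (altBlock n ++ [(-1) ^ (n + 1) * (γ + 1)]) = -((n + 1 : ℚ) * γ + 1) / (n * γ + 1) := by
  induction n with
  | zero => simp [altBlock, E]
  | succ n ih =>
    have hunfold : altBlock (n + 1) ++ [(-1) ^ (n + 1 + 1) * (γ + 1)] =
        -2 :: (altBlock n ++ [(-1) ^ (n + 1) * (γ + 1)]).map Neg.neg := by
      simp [altBlock_succ, pow_succ]
    have hn := natCast_mul_add_one_ne_zero n hγ
    have hn1 := natCast_mul_add_one_ne_zero (n + 1) hγ
    push_cast at hn1 ⊢
    rw [hunfold, E_cons_of_ne_nil _ (by simp), E_map_neg, ih]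
    field_simp
    ring

/-- For integers `α, β, γ` with `β > 0` and `γ ∉ {-1, 0}`,
`[α, β, γ] = [α+1, -2, 2, -2, …, ±2, (-1)^β (γ+1)]`, where the alternating block
`-2, 2, -2, …` has `β - 1` terms. -/
theorem cf_block_identity (α β γ : ℤ) (hβ : 0 < β) (hγ1 : γ ≠ -1) (hγ0 : γ ≠ 0) :
    E [α, β, γ] =
      E ((α + 1) ::
        (List.ofFn (fun i : Fin (β - 1).toNat => if (i : ℕ) % 2 = 0 then (-2 : ℤ) else 2) ++
          [(-1) ^ β.toNat * (γ + 1)])) := by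
  obtain ⟨n, rfl⟩ : ∃ n : ℕ, β = n + 1 := ⟨(β - 1).toNat, by omega⟩
  have hβn : ((n : ℤ) + 1).toNat = n + 1 := by omega
  have hn : ((n : ℤ) + 1 - 1).toNat = n := by omega
  have hn1 := natCast_mul_add_one_ne_zero (n + 1) hγ1
  have hγ : (γ : ℚ) ≠ 0 := by exact_mod_cast hγ0
  rw [hβn, hn, E_cons_of_ne_nil (α + 1) (by simp), ← altBlock, E_altBlock_append n hγ1]
  have hlhs : E [α, (n : ℤ) + 1, γ] = α + 1 / ((n + 1 : ℚ) + 1 / γ) := by simp [E]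
  push_cast at hn1 ⊢
  rw [hlhs]
  field_simp
  ring
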